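/- arXiv:2006.04292 — 4 statements merged into one kernel-verified Lean document; each statement's English description precedes it below -/
import Mathlib

section
/- Let T, T⁽¹⁾, …, T⁽ᴷ⁾ be real-valued random variables that are exchangeable (their joint distribution is invariant under any permutation of the K+1 variables). Define p = (1 + #{k : T ≤ T⁽ᵏ⁾})/(K + 1). Then for every α ∈ [0,1], P(p ≤ α) ≤ α. -/
/-!
Write `numGE i x = #{j ≠ i | x i ≤ x j}`, so that the p-value is `(1 + numGE 0 T) / (K + 1)`.
For a fixed vector `x`, at most `N` indices satisfy `numGE i x < N`: the one among them with the
smallest value lies below all the others. Hence the events `{numGE i T < N}` have probabilities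
summing to at most `N`; by exchangeability these probabilities are all equal, so each is at most
`N / (K + 1)`.
-/

open MeasureTheory Finset
open scoped ENNReal

section Combinatorics

variable {ι α : Type*} [Fintype ι] [DecidableEq ι] [LinearOrder α]

def numGE (i : ι) (x : ι → α) : ℕ :=
  #{j | j ≠ i ∧ x i ≤ x j}

theorem numGE_comp_perm (σ : Equiv.Perm ι) (i : ι) (x : ι → α) :
    numGE i (x ∘ σ) = numGE (σ i) x := by
  refine Finset.card_bij' (fun j _ => σ j) (fun j _ => σ.symm j) ?_ ?_ (by simp) (by simp) <;>
  · intro j hj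
    simp only [mem_filter, mem_univ, true_and, Function.comp_apply, ne_eq] at hj ⊢
    simpa [σ.injective.eq_iff, σ.symm_apply_eq, eq_comm] using hj

theorem card_filter_numGE_lt_le (x : ι → α) (N : ℕ) : #{i | numGE i x < N} ≤ N := by
  set S : Finset ι := {i | numGE i x < N}
  obtain hS | hS := S.eq_empty_or_nonempty
  · simp [hS]
  obtain ⟨i₀, hi₀, hmin⟩ := S.exists_min_image x hS
  have hsub : S.erase i₀ ⊆ ({j | j ≠ i₀ ∧ x i₀ ≤ x j} : Finset ι) := fun j hj => by
    rw [mem_erase] at hj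
    simpa using ⟨hj.1, hmin j hj.2⟩
  calc #S = #(S.erase i₀) + 1 := (card_erase_add_one hi₀).symm
    _ ≤ numGE i₀ x + 1 := by grw [card_le_card hsub]; rfl
    _ ≤ N := (mem_filter.1 hi₀).2

theorem numGE_zero_eq_card {K : ℕ} (x : Fin (K + 1) → α) :
    numGE 0 x = #{k : Fin K | x 0 ≤ x k.succ} := by
  simp [numGE, Fin.card_filter_univ_succ, Fin.succ_ne_zero]

end Combinatorics

section Probability

variable {ι α : Type*} [Fintype ι] [DecidableEq ι] [LinearOrder α] [TopologicalSpace α]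
  [OrderClosedTopology α] [SecondCountableTopology α] [MeasurableSpace α] [OpensMeasurableSpace α]

theorem measurable_numGE (i : ι) : Measurable (numGE i : (ι → α) → ℕ) := by
  have hsum : (numGE i : (ι → α) → ℕ) = fun x => ∑ j, if j ≠ i ∧ x i ≤ x j then 1 else 0 := by
    funext x
    rw [numGE, card_filter]
  rw [hsum]
  refine Finset.measurable_sum _ fun j _ => Measurable.ite ?_ measurable_const measurable_const
  exact (MeasurableSet.const _).inter
    (measurableSet_le (measurable_pi_apply i) (measurable_pi_apply j))

theorem sum_measure_numGE_lt_le (ν : Measure (ι → α)) (N : ℕ) :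
    ∑ i, ν {x | numGE i x < N} ≤ N * ν Set.univ := by
  have hE : ∀ i, MeasurableSet {x : ι → α | numGE i x < N} :=
    fun i => measurable_numGE i measurableSet_Iio
  calc ∑ i, ν {x | numGE i x < N}
      = ∫⁻ x, ∑ i, {x : ι → α | numGE i x < N}.indicator 1 x ∂ν := by
        rw [lintegral_finsetSum _ fun i _ => measurable_one.indicator (hE i)]
        simp_rw [lintegral_indicator_one (hE _)]
    _ = ∫⁻ x, (#{i | numGE i x < N} : ℝ≥0∞) ∂ν := by
        simp [Set.indicator_apply, Finset.sum_boole]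
    _ ≤ ∫⁻ _, (N : ℝ≥0∞) ∂ν :=
        lintegral_mono fun x => Nat.cast_le.2 (card_filter_numGE_lt_le x N)
    _ = N * ν Set.univ := lintegral_const _

theorem measure_numGE_lt_eq_of_perm_invariant {ν : Measure (ι → α)}
    (hν : ∀ σ : Equiv.Perm ι, ν.map (· ∘ σ) = ν) (N : ℕ) (i j : ι) :
    ν {x | numGE i x < N} = ν {x | numGE j x < N} := by
  have hperm : Measurable fun x : ι → α => x ∘ Equiv.swap i j := by fun_prop
  have hj : MeasurableSet {x : ι → α | numGE j x < N} := measurable_numGE j measurableSet_Iio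
  conv_rhs => rw [← hν (Equiv.swap i j), Measure.map_apply hperm hj]
  simp [Set.preimage, numGE_comp_perm]

theorem card_mul_measure_numGE_lt_le {ν : Measure (ι → α)} [IsProbabilityMeasure ν]
    (hν : ∀ σ : Equiv.Perm ι, ν.map (· ∘ σ) = ν) (N : ℕ) (i : ι) :
    Fintype.card ι * ν {x | numGE i x < N} ≤ N := by
  calc (Fintype.card ι : ℝ≥0∞) * ν {x | numGE i x < N}
      = ∑ j, ν {x | numGE j x < N} := by
        simp [measure_numGE_lt_eq_of_perm_invariant hν N _ i]
    _ ≤ N := by simpa using sum_measure_numGE_lt_le ν N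

end Probability

theorem one_add_div_le_iff_lt_floor {c n : ℕ} {α : ℝ} (hn : 0 < n) (hα : 0 ≤ α) :
    (1 + c : ℝ) / n ≤ α ↔ c < ⌊α * n⌋₊ := by
  rw [div_le_iff₀ (by positivity), Nat.lt_iff_add_one_le, Nat.le_floor_iff (by positivity)]
  push_cast
  rw [add_comm]

theorem ENNReal.le_ofReal_of_natCast_mul_le_floor {n : ℕ} (hn : n ≠ 0) {p : ℝ≥0∞} {α : ℝ}
    (hα : 0 ≤ α) (h : n * p ≤ ⌊α * n⌋₊) : p ≤ ENNReal.ofReal α := by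
  have hfloor : (⌊α * n⌋₊ : ℝ≥0∞) ≤ n * ENNReal.ofReal α := by
    calc (⌊α * n⌋₊ : ℝ≥0∞) = ENNReal.ofReal ⌊α * n⌋₊ := (ENNReal.ofReal_natCast _).symm
      _ ≤ ENNReal.ofReal (α * n) := ENNReal.ofReal_le_ofReal (Nat.floor_le (by positivity))
      _ = n * ENNReal.ofReal α := by
        rw [mul_comm, ENNReal.ofReal_mul (by positivity), ENNReal.ofReal_natCast]
  exact (ENNReal.mul_le_mul_iff_right (by simpa) (by simp)).1 (h.trans hfloor)

/-- For exchangeable statistics T⁽⁰⁾,…,T⁽ᴷ⁾ (with T = T⁽⁰⁾), the randomization p-value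
p = (1 + #{k ≥ 1 : T ≤ T⁽ᵏ⁾})/(K+1) satisfies P(p ≤ α) ≤ α for all α ∈ [0,1]. -/
theorem randomization_pvalue_valid
    {Ω : Type*} [MeasurableSpace Ω] (μ : Measure Ω) [IsProbabilityMeasure μ]
    {K : ℕ} (T : Fin (K + 1) → Ω → ℝ)
    (hmeas : ∀ i, Measurable (T i))
    -- exchangeability: the joint law is invariant under permutations of the K+1 variables
    (hexch : ∀ σ : Equiv.Perm (Fin (K + 1)),
      Measure.map (fun ω => fun i => T (σ i) ω) μ
        = Measure.map (fun ω => fun i => T i ω) μ) :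
    ∀ α : ℝ, 0 ≤ α → α ≤ 1 →
      μ {ω | (1 + ({k : Fin K | T 0 ω ≤ T k.succ ω}.ncard : ℝ)) / (K + 1) ≤ α}
        ≤ ENNReal.ofReal α := by
  intro α hα0 _
  set X : Ω → Fin (K + 1) → ℝ := fun ω i => T i ω
  have hX : Measurable X := measurable_pi_lambda _ hmeas
  have hinv : ∀ σ : Equiv.Perm (Fin (K + 1)), (μ.map X).map (· ∘ σ) = μ.map X := fun σ => by
    rw [Measure.map_map (by fun_prop) hX]
    exact hexch σ
  have : IsProbabilityMeasure (μ.map X) := Measure.isProbabilityMeasure_map hX.aemeasurable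
  have hevent : {ω | (1 + ({k : Fin K | T 0 ω ≤ T k.succ ω}.ncard : ℝ)) / (K + 1) ≤ α}
      = X ⁻¹' {x | numGE 0 x < ⌊α * (K + 1 : ℕ)⌋₊} := by
    ext ω
    simpa [X, numGE_zero_eq_card, Set.ncard_eq_toFinset_card'] using
      one_add_div_le_iff_lt_floor K.succ_pos hα0
  rw [hevent, ← Measure.map_apply hX (s := {x | numGE 0 x < _})
    (measurable_numGE 0 measurableSet_Iio)]
  refine ENNReal.le_ofReal_of_natCast_mul_le_floor K.succ_ne_zero hα0 ?_
  simpa using card_mul_measure_numGE_lt_le hinv _ 0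
end

section
/- Let Y, A, X be discrete random variables with Ŷ = f(X) for a fixed function f, and suppose Ŷ is conditionally independent of A given Y. Let Ã = h(Y, ε) where ε is independent of (X, A, Y) and the conditional law of Ã given Y equals that of A given Y. Then for any function T, the random variables T(Ŷ, Y, A) and T(Ŷ, Y, Ã) have the same distribution. -/
open MeasureTheory ProbabilityTheory

/-!
Since `ε` is independent of `(Ŷ, Y)`, on the event `{Y = y}` the dummy `Ã = h(y, ε)` is
independent of `Ŷ`: `P(Ŷ = ŷ, Ã = a, Y = y) = P(h(y, ε) = a) P(Ŷ = ŷ, Y = y)`, and matching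
conditional laws identify `P(h(y, ε) = a)` with `P(A = a | Y = y)`. Equalized odds is the same
factorization for `A`, so the triples `(Ŷ, Y, A)` and `(Ŷ, Y, Ã)` have the same law, hence so do
their images under any `T`.
-/

section

variable {Ω α E 𝒲 𝒜 𝒴 𝒵 : Type*} [MeasurableSpace Ω] {μ : Measure Ω}

theorem MeasureTheory.Measure.map_eq_map_of_measure_preimage_singleton_eq [MeasurableSpace α]
    [Countable α] [MeasurableSingletonClass α] {U V : Ω → α} (hU : Measurable U) (hV : Measurable V)
    (h : ∀ x, μ (U ⁻¹' {x}) = μ (V ⁻¹' {x})) : μ.map U = μ.map V :=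
  Measure.ext_of_singleton fun x => by
    rw [Measure.map_apply hU (measurableSet_singleton x),
      Measure.map_apply hV (measurableSet_singleton x), h]

theorem ProbabilityTheory.IndepFun.measure_apply_eq_and_eq_eq_mul [MeasurableSpace E]
    [Countable E] [MeasurableSingletonClass E] [MeasurableSpace 𝒲] [MeasurableSingletonClass 𝒲]
    {eps : Ω → E} {W : Ω → 𝒲} (hind : IndepFun eps W μ) (k : 𝒲 → E → 𝒜) (a : 𝒜) (w : 𝒲) :
    μ {ω | k (W ω) (eps ω) = a ∧ W ω = w} = μ {ω | k w (eps ω) = a} * μ {ω | W ω = w} := by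
  have hset : {ω | k (W ω) (eps ω) = a ∧ W ω = w} = eps ⁻¹' {e | k w e = a} ∩ W ⁻¹' {w} := by
    ext ω
    constructor <;> rintro ⟨hk, hw⟩ <;> simp_all
  rw [hset, hind.measure_inter_preimage_eq_mul _ _ (Set.to_countable _).measurableSet
    (measurableSet_singleton w)]
  rfl

theorem measure_fiber_eq_of_condIndepFun [IsFiniteMeasure μ] [MeasurableSpace E] [Countable E]
    [MeasurableSingletonClass E] [MeasurableSpace 𝒵] [MeasurableSingletonClass 𝒵]
    [MeasurableSpace 𝒴] [MeasurableSingletonClass 𝒴]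
    {Z : Ω → 𝒵} {A : Ω → 𝒜} {Y : Ω → 𝒴} {eps : Ω → E} {h : 𝒴 → E → 𝒜} {z : 𝒵} {a : 𝒜} {y : 𝒴}
    (hind : IndepFun eps (fun ω => (Z ω, Y ω)) μ) (hq : μ {ω | Y ω = y} ≠ 0)
    (hlaw : μ {ω | h (Y ω) (eps ω) = a ∧ Y ω = y} / μ {ω | Y ω = y}
      = μ {ω | A ω = a ∧ Y ω = y} / μ {ω | Y ω = y})
    (hcond : μ {ω | Z ω = z ∧ A ω = a ∧ Y ω = y} / μ {ω | Y ω = y}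
      = (μ {ω | Z ω = z ∧ Y ω = y} / μ {ω | Y ω = y}) *
        (μ {ω | A ω = a ∧ Y ω = y} / μ {ω | Y ω = y})) :
    μ {ω | Z ω = z ∧ A ω = a ∧ Y ω = y} = μ {ω | Z ω = z ∧ h (Y ω) (eps ω) = a ∧ Y ω = y} := by
  set q := μ {ω | Y ω = y}
  have hq_top : q ≠ ⊤ := measure_ne_top μ _
  set c := μ {ω | h y (eps ω) = a}
  have hA : μ {ω | A ω = a ∧ Y ω = y} = c * q := by
    rw [← ENNReal.div_mul_cancel (b := μ {ω | A ω = a ∧ Y ω = y}) hq hq_top, ← hlaw,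
      ENNReal.div_mul_cancel hq hq_top]
    have hind_Y : IndepFun eps Y μ := hind.comp measurable_id measurable_snd
    exact hind_Y.measure_apply_eq_and_eq_eq_mul h a y
  have hÃ : μ {ω | Z ω = z ∧ h (Y ω) (eps ω) = a ∧ Y ω = y}
      = c * μ {ω | Z ω = z ∧ Y ω = y} := by
    convert hind.measure_apply_eq_and_eq_eq_mul (fun p e => h p.2 e) a (z, y)
      using 3 <;> ext ω <;> simp only [Set.mem_ofPred_eq, Prod.mk.injEq]
    tauto
  calc μ {ω | Z ω = z ∧ A ω = a ∧ Y ω = y}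
      = μ {ω | Z ω = z ∧ Y ω = y} / q * (c * q / q) * q := by
        rw [← hA, ← hcond, ENNReal.div_mul_cancel hq hq_top]
    _ = μ {ω | Z ω = z ∧ h (Y ω) (eps ω) = a ∧ Y ω = y} := by
        rw [ENNReal.mul_div_cancel_right hq hq_top, mul_right_comm,
          ENNReal.div_mul_cancel hq hq_top, hÃ, mul_comm]

theorem map_prodMk_eq_of_condIndepFun [IsFiniteMeasure μ] [MeasurableSpace E] [Countable E]
    [MeasurableSingletonClass E] [MeasurableSpace 𝒵] [Countable 𝒵] [MeasurableSingletonClass 𝒵]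
    [MeasurableSpace 𝒴] [Countable 𝒴] [MeasurableSingletonClass 𝒴]
    [MeasurableSpace 𝒜] [Countable 𝒜] [MeasurableSingletonClass 𝒜]
    {Z : Ω → 𝒵} {A : Ω → 𝒜} {Y : Ω → 𝒴} {eps : Ω → E} (h : 𝒴 → E → 𝒜)
    (hZ : Measurable Z) (hA : Measurable A) (hY : Measurable Y)
    (hÃ : Measurable fun ω => h (Y ω) (eps ω)) (hind : IndepFun eps (fun ω => (Z ω, Y ω)) μ)
    (hlaw : ∀ (a : 𝒜) (y : 𝒴), μ {ω | Y ω = y} ≠ 0 →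
      μ {ω | h (Y ω) (eps ω) = a ∧ Y ω = y} / μ {ω | Y ω = y}
        = μ {ω | A ω = a ∧ Y ω = y} / μ {ω | Y ω = y})
    (hcond : ∀ (z : 𝒵) (a : 𝒜) (y : 𝒴), μ {ω | Y ω = y} ≠ 0 →
      μ {ω | Z ω = z ∧ A ω = a ∧ Y ω = y} / μ {ω | Y ω = y}
        = (μ {ω | Z ω = z ∧ Y ω = y} / μ {ω | Y ω = y}) *
          (μ {ω | A ω = a ∧ Y ω = y} / μ {ω | Y ω = y})) :
    μ.map (fun ω => (Z ω, Y ω, A ω)) = μ.map (fun ω => (Z ω, Y ω, h (Y ω) (eps ω))) := by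
  refine Measure.map_eq_map_of_measure_preimage_singleton_eq (hZ.prodMk (hY.prodMk hA))
    (hZ.prodMk (hY.prodMk hÃ)) ?_
  rintro ⟨z, y, a⟩
  have hfiber (B : Ω → 𝒜) :
      (fun ω => (Z ω, Y ω, B ω)) ⁻¹' {(z, y, a)} = {ω | Z ω = z ∧ B ω = a ∧ Y ω = y} := by
    ext ω
    simp [and_comm]
  rw [hfiber, hfiber]
  by_cases hq : μ {ω | Y ω = y} = 0
  · rw [measure_mono_null (fun ω hω => hω.2.2) hq, measure_mono_null (fun ω hω => hω.2.2) hq]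
  · exact measure_fiber_eq_of_condIndepFun hind hq (hlaw a y hq) (hcond z a y hq)

end

/-- If Ŷ = f(X) satisfies equalized odds and Ã = h(Y, ε) with ε independent of (X, A, Y)
and with the conditional law of Ã given Y matching that of A given Y, then for any test
statistic T, T(Ŷ, Y, A) and T(Ŷ, Y, Ã) have the same distribution. -/
theorem fair_dummies_test_statistic_invariance
    {Ω : Type*} [MeasurableSpace Ω] (μ : Measure Ω) [IsProbabilityMeasure μ]
    {𝒳 𝒜 𝒴 𝒴' E β : Type*}
    [Countable 𝒳] [Countable 𝒜] [Countable 𝒴] [Countable 𝒴'] [Countable E]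
    [MeasurableSpace 𝒳] [MeasurableSingletonClass 𝒳]
    [MeasurableSpace 𝒜] [MeasurableSingletonClass 𝒜]
    [MeasurableSpace 𝒴] [MeasurableSingletonClass 𝒴]
    [MeasurableSpace E] [MeasurableSingletonClass E]
    [MeasurableSpace β]
    (X : Ω → 𝒳) (A : Ω → 𝒜) (Y : Ω → 𝒴) (eps : Ω → E)
    (f : 𝒳 → 𝒴') (h : 𝒴 → E → 𝒜)
    (hX : Measurable X) (hA : Measurable A) (hY : Measurable Y) (heps : Measurable eps)
    -- ε is independent of (X, A, Y)
    (hindep : IndepFun eps (fun ω => (X ω, A ω, Y ω)) μ)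
    -- the conditional law of Ã = h(Y, ε) given Y equals that of A given Y
    (hlaw : ∀ (a : 𝒜) (y : 𝒴), μ {ω | Y ω = y} ≠ 0 →
      μ {ω | h (Y ω) (eps ω) = a ∧ Y ω = y} / μ {ω | Y ω = y}
        = μ {ω | A ω = a ∧ Y ω = y} / μ {ω | Y ω = y})
    -- equalized odds: Ŷ = f(X) is conditionally independent of A given Y
    (heo : ∀ (yh : 𝒴') (a : 𝒜) (y : 𝒴), μ {ω | Y ω = y} ≠ 0 →
      μ {ω | f (X ω) = yh ∧ A ω = a ∧ Y ω = y} / μ {ω | Y ω = y}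
        = (μ {ω | f (X ω) = yh ∧ Y ω = y} / μ {ω | Y ω = y}) *
          (μ {ω | A ω = a ∧ Y ω = y} / μ {ω | Y ω = y})) :
    ∀ T : 𝒴' → 𝒴 → 𝒜 → β,
      Measure.map (fun ω => T (f (X ω)) (Y ω) (A ω)) μ
        = Measure.map (fun ω => T (f (X ω)) (Y ω) (h (Y ω) (eps ω))) μ := by
  let _ : MeasurableSpace 𝒴' := ⊤
  intro T
  have hT : Measurable fun p : 𝒴' × 𝒴 × 𝒜 => T p.1 p.2.1 p.2.2 := measurable_of_countable _
  have hfX : Measurable fun ω => f (X ω) := (measurable_of_countable f).comp hX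
  have hind' : IndepFun eps (fun ω => (f (X ω), Y ω)) μ :=
    hindep.comp measurable_id (measurable_of_countable fun p : 𝒳 × 𝒜 × 𝒴 => (f p.1, p.2.2))
  have hÃ : Measurable fun ω => h (Y ω) (eps ω) :=
    (measurable_of_countable fun p : 𝒴 × E => h p.1 p.2).comp (hY.prodMk heps)
  have hlaw_triple := map_prodMk_eq_of_condIndepFun h hfX hA hY hÃ hind' hlaw heo
  calc μ.map (fun ω => T (f (X ω)) (Y ω) (A ω))
      = (μ.map fun ω => (f (X ω), Y ω, A ω)).map fun p => T p.1 p.2.1 p.2.2 :=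
        (Measure.map_map hT (hfX.prodMk (hY.prodMk hA))).symm
    _ = (μ.map fun ω => (f (X ω), Y ω, h (Y ω) (eps ω))).map fun p => T p.1 p.2.1 p.2.2 := by
        rw [hlaw_triple]
    _ = μ.map (fun ω => T (f (X ω)) (Y ω) (h (Y ω) (eps ω))) :=
        Measure.map_map hT (hfX.prodMk (hY.prodMk hÃ))
end

section
/- Let (Xᵢ, Aᵢ, Yᵢ), i = 1,…,n be i.i.d. discrete random triples, and let f be a fixed function with Ŷᵢ = f(Xᵢ). For each i, let Ãᵢ = h(Yᵢ, εᵢ) where ε₁,…,εₙ are i.i.d. and independent of all (Xᵢ, Aᵢ, Yᵢ), and the conditional law of Ãᵢ given Yᵢ equals that of Aᵢ given Yᵢ. If Ŷ₁ is conditionally independent of A₁ given Y₁, then the random vectors (Ŷ₁, A₁, Y₁, …, Ŷₙ, Aₙ, Yₙ) and (Ŷ₁, Ã₁, Y₁, …, Ŷₙ, Ãₙ, Yₙ) have the same joint distribution. -/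
/-!
Since the `εᵢ` are independent among themselves and of the whole data vector, the pairs
`(εᵢ, (Xᵢ, Aᵢ, Yᵢ))` are independent across `i`; hence both `n`-sample laws are products of their
one-sample marginals, and it suffices to compare those. For one sample, `ε` is independent of
`(Ŷ, Y)`, so on the atom `Y = y` the dummy `h(y, ε)` is independent of `Ŷ` and has the conditional
law of `A`; equalized odds says the same of `A`. Equalized odds passes from the first sample to
every other one because the triples are identically distributed.
-/

open MeasureTheory ProbabilityTheory
open scoped ENNReal

lemma ProbabilityTheory.iIndepFun.prodMk_of_indepFun {Ω ι α β : Type*} [MeasurableSpace Ω]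
    {μ : Measure Ω} [IsProbabilityMeasure μ] [Fintype ι] [MeasurableSpace α] [MeasurableSpace β]
    {X : ι → Ω → α} {Y : ι → Ω → β} (hXm : ∀ i, Measurable (X i)) (hYm : ∀ i, Measurable (Y i))
    (hX : iIndepFun X μ) (hY : iIndepFun Y μ)
    (hXY : IndepFun (fun ω i ↦ X i ω) (fun ω i ↦ Y i ω) μ) :
    iIndepFun (fun i ω ↦ (X i ω, Y i ω)) μ := by
  have hXvec : Measurable fun ω i ↦ X i ω := measurable_pi_lambda _ hXm
  have hYvec : Measurable fun ω i ↦ Y i ω := measurable_pi_lambda _ hYm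
  have hXYi (i : ι) : IndepFun (X i) (Y i) μ :=
    hXY.comp (measurable_pi_apply i) (measurable_pi_apply i)
  rw [iIndepFun_iff_map_fun_eq_pi_map fun i ↦ ((hXm i).prodMk (hYm i)).aemeasurable]
  have hsplit : (fun ω i ↦ (X i ω, Y i ω)) =
      (MeasurableEquiv.arrowProdEquivProdArrow α β ι).symm ∘
        fun ω ↦ (fun i ↦ X i ω, fun i ↦ Y i ω) :=
    rfl
  rw [hsplit, ← Measure.map_map (MeasurableEquiv.measurable _) (hXvec.prodMk hYvec),
    (indepFun_iff_map_prod_eq_prod_map_map hXvec.aemeasurable hYvec.aemeasurable).1 hXY,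
    hX.map_fun_eq_pi_map fun i ↦ (hXm i).aemeasurable,
    hY.map_fun_eq_pi_map fun i ↦ (hYm i).aemeasurable,
    ((measurePreserving_arrowProdEquivProdArrow α β ι _ _).symm _).map_eq]
  congr 1
  funext i
  exact ((indepFun_iff_map_prod_eq_prod_map_map (hXm i).aemeasurable (hYm i).aemeasurable).1
    (hXYi i)).symm

lemma ENNReal.eq_mul_div_of_div_eq_div_mul_div {a b c p : ℝ≥0∞} (hp : p ≠ 0) (hp' : p ≠ ⊤)
    (h : a / p = b / p * (c / p)) : a = b * (c / p) := by
  rw [← ENNReal.div_mul_cancel hp hp' (b := a), h, mul_right_comm,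
    ENNReal.div_mul_cancel hp hp']

section Discrete

variable {Ω α β γ E : Type*} [MeasurableSpace Ω] {μ ν : Measure Ω}
  [MeasurableSpace α] [MeasurableSingletonClass α] [Countable α]
  [MeasurableSpace β] [MeasurableSingletonClass β] [Countable β]
  [MeasurableSpace γ] [MeasurableSingletonClass γ] [Countable γ]
  [MeasurableSpace E] [MeasurableSingletonClass E] [Countable E]

def CondIndepOnAtoms (μ : Measure Ω) (U : Ω → α) (V : Ω → β) (W : Ω → γ) : Prop :=
  ∀ u v w, μ {ω | W ω = w} ≠ 0 →
    μ {ω | U ω = u ∧ V ω = v ∧ W ω = w} / μ {ω | W ω = w}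
      = (μ {ω | U ω = u ∧ W ω = w} / μ {ω | W ω = w}) *
        (μ {ω | V ω = v ∧ W ω = w} / μ {ω | W ω = w})

lemma CondIndepOnAtoms.of_identDistrib {U U' : Ω → α} {V V' : Ω → β} {W W' : Ω → γ}
    (hid : IdentDistrib (fun ω ↦ (U ω, V ω, W ω)) (fun ω ↦ (U' ω, V' ω, W' ω)) μ ν)
    (h : CondIndepOnAtoms ν U' V' W') : CondIndepOnAtoms μ U V W := by
  have hP (P : α × β × γ → Prop) :
      μ {ω | P (U ω, V ω, W ω)} = ν {ω | P (U' ω, V' ω, W' ω)} :=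
    hid.measure_mem_eq (Set.to_countable {t | P t}).measurableSet
  intro u v w hw
  rw [show μ {ω | W ω = w} = ν {ω | W' ω = w} from hP fun t ↦ t.2.2 = w] at hw ⊢
  rw [show μ {ω | U ω = u ∧ V ω = v ∧ W ω = w} = ν {ω | U' ω = u ∧ V' ω = v ∧ W' ω = w} from
      hP fun t ↦ t.1 = u ∧ t.2.1 = v ∧ t.2.2 = w,
    show μ {ω | U ω = u ∧ W ω = w} = ν {ω | U' ω = u ∧ W' ω = w} from
      hP fun t ↦ t.1 = u ∧ t.2.2 = w,
    show μ {ω | V ω = v ∧ W ω = w} = ν {ω | V' ω = v ∧ W' ω = w} from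
      hP fun t ↦ t.2.1 = v ∧ t.2.2 = w]
  exact h u v w hw

variable [IsFiniteMeasure μ]

lemma map_prodMk_eq_of_condIndepOnAtoms {U : Ω → α} {V : Ω → β} {W : Ω → γ} {ε : Ω → E}
    (h : γ → E → β) (hU : Measurable U) (hV : Measurable V) (hW : Measurable W)
    (hε : Measurable ε) (hεUW : IndepFun ε (fun ω ↦ (U ω, W ω)) μ)
    (hlaw : ∀ v w, μ {ω | W ω = w} ≠ 0 →
      μ {ω | h (W ω) (ε ω) = v ∧ W ω = w} / μ {ω | W ω = w}
        = μ {ω | V ω = v ∧ W ω = w} / μ {ω | W ω = w})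
    (hUV : CondIndepOnAtoms μ U V W) :
    μ.map (fun ω ↦ (U ω, V ω, W ω)) = μ.map (fun ω ↦ (U ω, h (W ω) (ε ω), W ω)) := by
  have hhW : Measurable fun ω ↦ h (W ω) (ε ω) :=
    (measurable_of_countable (Function.uncurry h)).comp (hW.prodMk hε)
  refine Measure.ext_of_singleton fun ⟨u, v, w⟩ ↦ ?_
  rw [Measure.map_apply (hU.prodMk (hV.prodMk hW)) (measurableSet_singleton _),
    Measure.map_apply (hU.prodMk (hhW.prodMk hW)) (measurableSet_singleton _)]
  simp only [Set.preimage, Set.mem_singleton_iff, Prod.mk.injEq]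
  by_cases hw : μ {ω | W ω = w} = 0
  · rw [measure_mono_null (fun ω hω ↦ hω.2.2) hw, measure_mono_null (fun ω hω ↦ hω.2.2) hw]
  have hmul (P : E → Prop) (Q : α × γ → Prop) :
      μ {ω | P (ε ω) ∧ Q (U ω, W ω)} = μ {ω | P (ε ω)} * μ {ω | Q (U ω, W ω)} :=
    hεUW.measure_inter_preimage_eq_mul _ _ (Set.to_countable {e | P e}).measurableSet
      (Set.to_countable {t | Q t}).measurableSet
  have hnoise : μ {ω | h w (ε ω) = v} = μ {ω | V ω = v ∧ W ω = w} / μ {ω | W ω = w} := by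
    rw [← hlaw v w hw, ENNReal.eq_div_iff hw (measure_ne_top _ _), mul_comm,
      ← hmul (h w · = v) (·.2 = w)]
    congr 1
    ext ω
    exact and_congr_left fun hω : W ω = w ↦ by rw [hω]
  have hdummy : μ {ω | U ω = u ∧ h (W ω) (ε ω) = v ∧ W ω = w}
      = μ {ω | U ω = u ∧ W ω = w} * μ {ω | h w (ε ω) = v} := by
    rw [mul_comm, ← hmul (h w · = v) fun t ↦ t.1 = u ∧ t.2 = w]
    congr 1
    ext ω
    grind
  rw [hdummy, hnoise]
  exact ENNReal.eq_mul_div_of_div_eq_div_mul_div hw (measure_ne_top _ _) (hUV u v w hw)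

end Discrete

theorem fair_dummies_n_sample_general
    {Ω : Type*} [MeasurableSpace Ω] (μ : Measure Ω) [IsProbabilityMeasure μ]
    {𝒳 𝒜 𝒴 𝒴' E : Type*}
    [Countable 𝒳] [Countable 𝒜] [Countable 𝒴] [Countable 𝒴'] [Countable E]
    [MeasurableSpace 𝒳] [MeasurableSingletonClass 𝒳]
    [MeasurableSpace 𝒜] [MeasurableSingletonClass 𝒜]
    [MeasurableSpace 𝒴] [MeasurableSingletonClass 𝒴]
    [MeasurableSpace 𝒴'] [MeasurableSingletonClass 𝒴']
    [MeasurableSpace E] [MeasurableSingletonClass E]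
    {n : ℕ} (hn : 0 < n)
    (X : Fin n → Ω → 𝒳) (A : Fin n → Ω → 𝒜) (Y : Fin n → Ω → 𝒴) (eps : Fin n → Ω → E)
    (f : 𝒳 → 𝒴') (h : 𝒴 → E → 𝒜)
    (hX : ∀ i, Measurable (X i)) (hA : ∀ i, Measurable (A i))
    (hY : ∀ i, Measurable (Y i)) (heps : ∀ i, Measurable (eps i))
    -- the triples (Xᵢ, Aᵢ, Yᵢ) are i.i.d.
    (hindep : iIndepFun (fun i ω => (X i ω, A i ω, Y i ω)) μ)
    (hident : ∀ i j, IdentDistrib (fun ω => (X i ω, A i ω, Y i ω))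
      (fun ω => (X j ω, A j ω, Y j ω)) μ μ)
    -- the εᵢ are i.i.d. and independent of all the triples
    (hepsindep : iIndepFun eps μ)
    (hepsdata : IndepFun (fun ω (i : Fin n) => eps i ω)
      (fun ω (i : Fin n) => (X i ω, A i ω, Y i ω)) μ)
    -- the conditional law of Ãᵢ = h(Yᵢ, εᵢ) given Yᵢ equals that of Aᵢ given Yᵢ
    (hlaw : ∀ (i : Fin n) (a : 𝒜) (y : 𝒴), μ {ω | Y i ω = y} ≠ 0 →
      μ {ω | h (Y i ω) (eps i ω) = a ∧ Y i ω = y} / μ {ω | Y i ω = y}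
        = μ {ω | A i ω = a ∧ Y i ω = y} / μ {ω | Y i ω = y})
    -- equalized odds for the first sample: Ŷ₁ ⟂ A₁ ∣ Y₁
    (heo : ∀ (yh : 𝒴') (a : 𝒜) (y : 𝒴), μ {ω | Y ⟨0, hn⟩ ω = y} ≠ 0 →
      μ {ω | f (X ⟨0, hn⟩ ω) = yh ∧ A ⟨0, hn⟩ ω = a ∧ Y ⟨0, hn⟩ ω = y}
          / μ {ω | Y ⟨0, hn⟩ ω = y}
        = (μ {ω | f (X ⟨0, hn⟩ ω) = yh ∧ Y ⟨0, hn⟩ ω = y} / μ {ω | Y ⟨0, hn⟩ ω = y}) *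
          (μ {ω | A ⟨0, hn⟩ ω = a ∧ Y ⟨0, hn⟩ ω = y} / μ {ω | Y ⟨0, hn⟩ ω = y})) :
    Measure.map (fun ω (i : Fin n) => (f (X i ω), A i ω, Y i ω)) μ
      = Measure.map (fun ω (i : Fin n) => (f (X i ω), h (Y i ω) (eps i ω), Y i ω)) μ := by
  have hdata (i : Fin n) : Measurable fun ω ↦ (X i ω, A i ω, Y i ω) :=
    (hX i).prodMk ((hA i).prodMk (hY i))
  have hsample : iIndepFun (fun i ω ↦ (eps i ω, X i ω, A i ω, Y i ω)) μ :=
    hepsindep.prodMk_of_indepFun heps hdata hindep hepsdata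
  have hobs : iIndepFun (fun i ω ↦ (f (X i ω), A i ω, Y i ω)) μ :=
    hindep.comp (fun _ t ↦ (f t.1, t.2)) fun _ ↦ measurable_of_countable _
  have hdummy : iIndepFun (fun i ω ↦ (f (X i ω), h (Y i ω) (eps i ω), Y i ω)) μ :=
    hsample.comp (fun _ s ↦ (f s.2.1, h s.2.2.2 s.1, s.2.2.2)) fun _ ↦ measurable_of_countable _
  have hobs_meas (i : Fin n) : Measurable fun ω ↦ (f (X i ω), A i ω, Y i ω) :=
    (measurable_of_countable fun t : 𝒳 × 𝒜 × 𝒴 ↦ (f t.1, t.2)).comp (hdata i)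
  have hdummy_meas (i : Fin n) : Measurable fun ω ↦ (f (X i ω), h (Y i ω) (eps i ω), Y i ω) :=
    (measurable_of_countable fun s : E × 𝒳 × 𝒜 × 𝒴 ↦ (f s.2.1, h s.2.2.2 s.1, s.2.2.2)).comp
      ((heps i).prodMk (hdata i))
  rw [hobs.map_fun_eq_pi_map fun i ↦ (hobs_meas i).aemeasurable,
    hdummy.map_fun_eq_pi_map fun i ↦ (hdummy_meas i).aemeasurable]
  congr 1
  funext i
  have heo_i : CondIndepOnAtoms μ (fun ω ↦ f (X i ω)) (A i) (Y i) :=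
    CondIndepOnAtoms.of_identDistrib ((hident i ⟨0, hn⟩).comp
      (measurable_of_countable fun t ↦ (f t.1, t.2))) heo
  have hεi : IndepFun (eps i) (fun ω ↦ (f (X i ω), Y i ω)) μ :=
    hepsdata.comp (measurable_pi_apply i)
      ((measurable_of_countable fun t : 𝒳 × 𝒜 × 𝒴 ↦ (f t.1, t.2.2)).comp (measurable_pi_apply i))
  exact map_prodMk_eq_of_condIndepOnAtoms h ((measurable_of_countable f).comp (hX i)) (hA i)
    (hY i) (heps i) hεi (hlaw i) heo_i

/-- n-sample extension of Proposition 1: for i.i.d. triples (Xᵢ, Aᵢ, Yᵢ) with Ŷᵢ = f(Xᵢ)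
and fair dummies Ãᵢ = h(Yᵢ, εᵢ) built from i.i.d. noise independent of the data, if
equalized odds holds then the two n-sample joint distributions coincide. -/
theorem fair_dummies_n_sample
    {Ω : Type*} [MeasurableSpace Ω] (μ : Measure Ω) [IsProbabilityMeasure μ]
    {𝒳 𝒜 𝒴 𝒴' E : Type*}
    [Countable 𝒳] [Countable 𝒜] [Countable 𝒴] [Countable 𝒴'] [Countable E]
    [MeasurableSpace 𝒳] [MeasurableSingletonClass 𝒳]
    [MeasurableSpace 𝒜] [MeasurableSingletonClass 𝒜]
    [MeasurableSpace 𝒴] [MeasurableSingletonClass 𝒴]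
    [MeasurableSpace 𝒴'] [MeasurableSingletonClass 𝒴']
    [MeasurableSpace E] [MeasurableSingletonClass E]
    {n : ℕ} (hn : 0 < n)
    (X : Fin n → Ω → 𝒳) (A : Fin n → Ω → 𝒜) (Y : Fin n → Ω → 𝒴) (eps : Fin n → Ω → E)
    (f : 𝒳 → 𝒴') (h : 𝒴 → E → 𝒜)
    (hX : ∀ i, Measurable (X i)) (hA : ∀ i, Measurable (A i))
    (hY : ∀ i, Measurable (Y i)) (heps : ∀ i, Measurable (eps i))
    -- the triples (Xᵢ, Aᵢ, Yᵢ) are i.i.d.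
    (hindep : iIndepFun (fun i ω => (X i ω, A i ω, Y i ω)) μ)
    (hident : ∀ i j, IdentDistrib (fun ω => (X i ω, A i ω, Y i ω))
      (fun ω => (X j ω, A j ω, Y j ω)) μ μ)
    -- the εᵢ are i.i.d. and independent of all the triples
    (hepsindep : iIndepFun eps μ)
    (hepsident : ∀ i j, IdentDistrib (eps i) (eps j) μ μ)
    (hepsdata : IndepFun (fun ω (i : Fin n) => eps i ω)
      (fun ω (i : Fin n) => (X i ω, A i ω, Y i ω)) μ)
    -- the conditional law of Ãᵢ = h(Yᵢ, εᵢ) given Yᵢ equals that of Aᵢ given Yᵢ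
    (hlaw : ∀ (i : Fin n) (a : 𝒜) (y : 𝒴), μ {ω | Y i ω = y} ≠ 0 →
      μ {ω | h (Y i ω) (eps i ω) = a ∧ Y i ω = y} / μ {ω | Y i ω = y}
        = μ {ω | A i ω = a ∧ Y i ω = y} / μ {ω | Y i ω = y})
    -- equalized odds for the first sample: Ŷ₁ ⟂ A₁ ∣ Y₁
    (heo : ∀ (yh : 𝒴') (a : 𝒜) (y : 𝒴), μ {ω | Y ⟨0, hn⟩ ω = y} ≠ 0 →
      μ {ω | f (X ⟨0, hn⟩ ω) = yh ∧ A ⟨0, hn⟩ ω = a ∧ Y ⟨0, hn⟩ ω = y}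
          / μ {ω | Y ⟨0, hn⟩ ω = y}
        = (μ {ω | f (X ⟨0, hn⟩ ω) = yh ∧ Y ⟨0, hn⟩ ω = y} / μ {ω | Y ⟨0, hn⟩ ω = y}) *
          (μ {ω | A ⟨0, hn⟩ ω = a ∧ Y ⟨0, hn⟩ ω = y} / μ {ω | Y ⟨0, hn⟩ ω = y})) :
    Measure.map (fun ω (i : Fin n) => (f (X i ω), A i ω, Y i ω)) μ
      = Measure.map (fun ω (i : Fin n) => (f (X i ω), h (Y i ω) (eps i ω), Y i ω)) μ :=
  fair_dummies_n_sample_general μ hn X A Y eps f h hX hA hY heps hindep hident hepsindep hepsdata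
    hlaw heo
end

section
/- Let Ŷ, A, Y be discrete random variables. Suppose that for every measurable function T taking values in ℝ, the random variables T(Ŷ, A, Y) and T(Ŷ, Ã, Y) have the same distribution, where Ã is conditionally independent of (Ŷ, A) given Y with the same conditional law given Y as A. Then Ŷ is conditionally independent of A given Y. -/
/-!
Taking for `T` the indicator of a single triple shows that `(Ŷ, A, Y)` and `(Ŷ, Ã, Y)` have the
same joint law. Summing the factorization of `(Ã, Ŷ, A)` given `Y` over the values of `A` shows
that `Ã` is conditionally independent of `Ŷ` given `Y`; since `Ã` has the conditional law of `A`,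
the law of `(Ŷ, Ã, Y)`, hence that of `(Ŷ, A, Y)`, factors given `Y`.
-/

open MeasureTheory ENNReal

theorem ENNReal.div_eq_div_mul_div_iff {x y z c : ℝ≥0∞} (h0 : c ≠ 0) (htop : c ≠ ∞) :
    x / c = y / c * (z / c) ↔ x * c = y * z := by
  have hassoc : y / c * (z / c) = y * z / c / c := by simp only [div_eq_mul_inv]; ring
  rw [hassoc, ENNReal.div_eq_div_iff h0 htop h0 htop, ENNReal.mul_right_inj h0 htop,
    ENNReal.eq_div_iff h0 htop, mul_comm]

namespace MeasureTheory

theorem Measure.map_eq_of_forall_map_comp_eq {Ω β : Type*} [MeasurableSpace Ω]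
    [MeasurableSpace β] {μ : Measure Ω} {X X' : Ω → β} (hX : Measurable X) (hX' : Measurable X')
    (h : ∀ T : β → ℝ, Measurable T → μ.map (T ∘ X) = μ.map (T ∘ X')) :
    μ.map X = μ.map X' := by
  ext s hs
  have hT : Measurable (s.indicator (1 : β → ℝ)) := measurable_one.indicator hs
  have hmap : ∀ Z : Ω → β, Measurable Z →
      μ.map (s.indicator (1 : β → ℝ) ∘ Z) {1} = μ.map Z s := by
    intro Z hZ
    rw [Measure.map_apply (hT.comp hZ) (measurableSet_singleton 1), Measure.map_apply hZ hs]
    congr 1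
    ext ω
    by_cases hω : Z ω ∈ s <;> simp [hω]
  rw [← hmap X hX, ← hmap X' hX', h _ hT]

section Fibers

variable {Ω α : Type*} [MeasurableSpace Ω] [MeasurableSpace α] [Countable α]
  [MeasurableSingletonClass α] (μ : Measure Ω) {A : Ω → α}

theorem tsum_measure_inter_preimage_singleton (hA : Measurable A) (s : Set Ω) :
    ∑' a, μ (s ∩ A ⁻¹' {a}) = μ s := by
  calc ∑' a, μ (s ∩ A ⁻¹' {a}) = ∑' a, μ.restrict s (A ⁻¹' {a}) :=
        tsum_congr fun a => by
          rw [Measure.restrict_apply (hA (measurableSet_singleton a)), Set.inter_comm]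
    _ = μ.restrict s (A ⁻¹' Set.univ) := by
        rw [← tsum_univ, tsum_measure_preimage_singleton Set.countable_univ
          (fun a _ => hA (measurableSet_singleton a))]
    _ = μ s := by simp

theorem measure_mul_eq_mul_of_forall_fiber (hA : Measurable A) {s t : Set Ω} {c r : ℝ≥0∞}
    (h : ∀ a, μ (s ∩ A ⁻¹' {a}) * c = r * μ (t ∩ A ⁻¹' {a})) : μ s * c = r * μ t := by
  rw [← tsum_measure_inter_preimage_singleton μ hA s,
    ← tsum_measure_inter_preimage_singleton μ hA t, ← ENNReal.tsum_mul_right,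
    ← ENNReal.tsum_mul_left, tsum_congr h]

end Fibers

end MeasureTheory

theorem fair_dummies_test_complete_general
    {Ω : Type*} [MeasurableSpace Ω] (μ : Measure Ω) [IsProbabilityMeasure μ]
    {𝒴' 𝒜 𝒴 : Type*} [Countable 𝒜]
    [MeasurableSpace 𝒴'] [MeasurableSingletonClass 𝒴']
    [MeasurableSpace 𝒜] [MeasurableSingletonClass 𝒜]
    [MeasurableSpace 𝒴] [MeasurableSingletonClass 𝒴]
    (Yhat : Ω → 𝒴') (A : Ω → 𝒜) (Y : Ω → 𝒴) (Atil : Ω → 𝒜)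
    (hYhat : Measurable Yhat) (hA : Measurable A) (hY : Measurable Y)
    (hAtil : Measurable Atil)
    -- Ã is conditionally independent of (Ŷ, A) given Y
    (hci : ∀ (b : 𝒜) (yh : 𝒴') (a : 𝒜) (y : 𝒴), μ {ω | Y ω = y} ≠ 0 →
      μ {ω | Atil ω = b ∧ Yhat ω = yh ∧ A ω = a ∧ Y ω = y} / μ {ω | Y ω = y}
        = (μ {ω | Atil ω = b ∧ Y ω = y} / μ {ω | Y ω = y}) *
          (μ {ω | Yhat ω = yh ∧ A ω = a ∧ Y ω = y} / μ {ω | Y ω = y}))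
    -- conditional law of Ã given Y equals that of A given Y
    (hlaw : ∀ (a : 𝒜) (y : 𝒴), μ {ω | Y ω = y} ≠ 0 →
      μ {ω | Atil ω = a ∧ Y ω = y} / μ {ω | Y ω = y}
        = μ {ω | A ω = a ∧ Y ω = y} / μ {ω | Y ω = y})
    -- every measurable test statistic has the same distribution on the two triples
    (hT : ∀ T : 𝒴' × 𝒜 × 𝒴 → ℝ, Measurable T →
      Measure.map (fun ω => T (Yhat ω, A ω, Y ω)) μ
        = Measure.map (fun ω => T (Yhat ω, Atil ω, Y ω)) μ) :
    ∀ (yh : 𝒴') (a : 𝒜) (y : 𝒴), μ {ω | Y ω = y} ≠ 0 →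
      μ {ω | Yhat ω = yh ∧ A ω = a ∧ Y ω = y} / μ {ω | Y ω = y}
        = (μ {ω | Yhat ω = yh ∧ Y ω = y} / μ {ω | Y ω = y}) *
          (μ {ω | A ω = a ∧ Y ω = y} / μ {ω | Y ω = y}) := by
  intro yh a y hy
  have hfin : μ {ω | Y ω = y} ≠ ∞ := measure_ne_top μ _
  have hjoint : μ {ω | Yhat ω = yh ∧ A ω = a ∧ Y ω = y}
      = μ {ω | Yhat ω = yh ∧ Atil ω = a ∧ Y ω = y} := by
    have hpush := congrArg (· {(yh, a, y)})
      (Measure.map_eq_of_forall_map_comp_eq (by fun_prop) (by fun_prop) hT)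
    rw [Measure.map_apply (by fun_prop) (measurableSet_singleton _),
      Measure.map_apply (by fun_prop) (measurableSet_singleton _)] at hpush
    simpa only [Set.preimage, Set.mem_singleton_iff, Prod.mk.injEq] using hpush
  have hdummy : μ {ω | Atil ω = a ∧ Y ω = y} = μ {ω | A ω = a ∧ Y ω = y} := by
    have h := hlaw a y hy
    rwa [ENNReal.div_eq_div_iff hy hfin hy hfin, ENNReal.mul_right_inj hy hfin] at h
  have hmarg : μ {ω | Yhat ω = yh ∧ Atil ω = a ∧ Y ω = y} * μ {ω | Y ω = y}
      = μ {ω | Atil ω = a ∧ Y ω = y} * μ {ω | Yhat ω = yh ∧ Y ω = y} :=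
    measure_mul_eq_mul_of_forall_fiber μ hA fun a' => by
      convert (ENNReal.div_eq_div_mul_div_iff hy hfin).1 (hci a yh a' y hy) using 3 <;>
      · ext ω
        simp only [Set.mem_inter_iff, Set.mem_preimage, Set.mem_singleton_iff, Set.mem_ofPred_eq]
        tauto
  rw [ENNReal.div_eq_div_mul_div_iff hy hfin, hjoint, hmarg, hdummy, mul_comm]

/-- Converse completeness of the fair dummies test: if no (measurable, real-valued) test
statistic T can distinguish (Ŷ, A, Y) from (Ŷ, Ã, Y) in distribution, where Ã is a fair
dummy (conditionally independent of (Ŷ, A) given Y, with the same conditional law given Y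
as A), then Ŷ ⟂ A ∣ Y. -/
theorem fair_dummies_test_complete
    {Ω : Type*} [MeasurableSpace Ω] (μ : Measure Ω) [IsProbabilityMeasure μ]
    {𝒴' 𝒜 𝒴 : Type*} [Countable 𝒴'] [Countable 𝒜] [Countable 𝒴]
    [MeasurableSpace 𝒴'] [MeasurableSingletonClass 𝒴']
    [MeasurableSpace 𝒜] [MeasurableSingletonClass 𝒜]
    [MeasurableSpace 𝒴] [MeasurableSingletonClass 𝒴]
    (Yhat : Ω → 𝒴') (A : Ω → 𝒜) (Y : Ω → 𝒴) (Atil : Ω → 𝒜)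
    (hYhat : Measurable Yhat) (hA : Measurable A) (hY : Measurable Y)
    (hAtil : Measurable Atil)
    -- Ã is conditionally independent of (Ŷ, A) given Y
    (hci : ∀ (b : 𝒜) (yh : 𝒴') (a : 𝒜) (y : 𝒴), μ {ω | Y ω = y} ≠ 0 →
      μ {ω | Atil ω = b ∧ Yhat ω = yh ∧ A ω = a ∧ Y ω = y} / μ {ω | Y ω = y}
        = (μ {ω | Atil ω = b ∧ Y ω = y} / μ {ω | Y ω = y}) *
          (μ {ω | Yhat ω = yh ∧ A ω = a ∧ Y ω = y} / μ {ω | Y ω = y}))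
    -- conditional law of Ã given Y equals that of A given Y
    (hlaw : ∀ (a : 𝒜) (y : 𝒴), μ {ω | Y ω = y} ≠ 0 →
      μ {ω | Atil ω = a ∧ Y ω = y} / μ {ω | Y ω = y}
        = μ {ω | A ω = a ∧ Y ω = y} / μ {ω | Y ω = y})
    -- every measurable test statistic has the same distribution on the two triples
    (hT : ∀ T : 𝒴' × 𝒜 × 𝒴 → ℝ, Measurable T →
      Measure.map (fun ω => T (Yhat ω, A ω, Y ω)) μ
        = Measure.map (fun ω => T (Yhat ω, Atil ω, Y ω)) μ) :
    ∀ (yh : 𝒴') (a : 𝒜) (y : 𝒴), μ {ω | Y ω = y} ≠ 0 →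
      μ {ω | Yhat ω = yh ∧ A ω = a ∧ Y ω = y} / μ {ω | Y ω = y}
        = (μ {ω | Yhat ω = yh ∧ Y ω = y} / μ {ω | Y ω = y}) *
          (μ {ω | A ω = a ∧ Y ω = y} / μ {ω | Y ω = y}) :=
  fair_dummies_test_complete_general μ Yhat A Y Atil hYhat hA hY hAtil hci hlaw hT
end
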